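/- arXiv:0905.4517 — 7 statements merged into one kernel-verified Lean document; each statement's English description precedes it below -/
import Mathlib

section
/- A string of length at most ak-1 over an alphabet of size a cannot contain every length-k word over that alphabet as a (not necessarily contiguous) subsequence; conversely, the string formed by writing the alphabet k times in succession (length ak) contains every length-k word as a subsequence. Hence the minimal length of a k-omni string over an a-letter alphabet is exactly ak. -/
/-!
Lower bound, by induction on `k`: every letter occurs in an omni string `S`, so if `c` is the
letter whose first occurrence in `S` comes last, that occurrence is at position at least
`a - 1`. Any embedding of a word `c :: T` must map `c` no earlier than it, so the suffix of `S`
after it is `(k - 1)`-omni and has length at least `a * (k - 1)`.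
Upper bound: the `i`-th letter of a word is taken from the `i`-th copy of the alphabet.
-/

namespace List

variable {α : Type*}

theorem sublist_drop_idxOf_of_cons_sublist [DecidableEq α] {c : α} {T S : List α}
    (h : c :: T <+ S) : T <+ S.drop (S.idxOf c + 1) := by
  induction S with
  | nil => simp at h
  | cons x S ih =>
    by_cases hx : x = c
    · subst hx
      simpa using h
    · rw [idxOf_cons_ne _ hx]
      exact ih (h.of_cons_of_ne (Ne.symm hx))

theorem sublist_flatten_replicate {T L : List α} {k : ℕ} (hT : ∀ x ∈ T, x ∈ L)
    (hk : T.length ≤ k) : T <+ (replicate k L).flatten := by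
  induction T generalizing k with
  | nil => exact nil_sublist _
  | cons x T ih =>
    obtain ⟨k, rfl⟩ : ∃ k', k = k' + 1 := Nat.exists_eq_succ_of_ne_zero (by simp at hk; omega)
    rw [replicate_succ, flatten_cons]
    simpa using (singleton_sublist.2 (hT x mem_cons_self)).append
      (ih (fun y hy => hT y (mem_cons_of_mem _ hy)) (by simpa using hk))

end List

open List

variable {α : Type*} [Fintype α] [DecidableEq α]

theorem exists_card_le_idxOf_add_one [Nonempty α] {S : List α} (hS : ∀ c, c ∈ S) :
    ∃ c, Fintype.card α ≤ S.idxOf c + 1 := by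
  obtain ⟨c, hc⟩ := Finite.exists_max (S.idxOf ·)
  refine ⟨c, ?_⟩
  simpa using Fintype.card_le_of_injective
    (fun x => (⟨S.idxOf x, Nat.lt_succ_of_le (hc x)⟩ : Fin (S.idxOf c + 1)))
    (fun x y h => (idxOf_inj (hS x)).mp (congrArg Fin.val h))

theorem card_mul_le_length_of_forall_sublist {k : ℕ} {S : List α}
    (hS : ∀ T : List α, T.length = k → T <+ S) : Fintype.card α * k ≤ S.length := by
  induction k generalizing S with
  | zero => simp
  | succ k ih =>
    cases isEmpty_or_nonempty α
    · simp
    have hmem : ∀ c, c ∈ S := fun c => (hS (replicate (k + 1) c) (by simp)).subset (by simp)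
    obtain ⟨c, hc⟩ := exists_card_le_idxOf_add_one hmem
    have hsuffix := ih fun T hT => sublist_drop_idxOf_of_cons_sublist (hS (c :: T) (by simp [hT]))
    have hc_lt := idxOf_lt_length_of_mem (hmem c)
    rw [length_drop] at hsuffix
    rw [Nat.mul_succ]
    omega

theorem stmt_0_general (a k : ℕ) :
    (∀ S : List (Fin a),
      (∀ T : List (Fin a), T.length = k → T.Sublist S) → a * k ≤ S.length) ∧
    ((List.replicate k (List.ofFn (fun i : Fin a => i))).flatten.length = a * k ∧
      ∀ T : List (Fin a), T.length = k →
        T.Sublist (List.replicate k (List.ofFn (fun i : Fin a => i))).flatten) := by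
  refine ⟨fun S hS => by simpa using card_mul_le_length_of_forall_sublist hS, ?_,
    fun T hT => sublist_flatten_replicate (by simp) hT.le⟩
  simp [length_flatten, Nat.mul_comm]

/-- The minimal length of a `k`-omni string over an `a`-letter alphabet is exactly `a * k`:
any string containing every length-`k` word over `Fin a` as a (scattered) subsequence has
length at least `a * k`, and the string obtained by writing the alphabet `k` times in
succession has length `a * k` and contains every length-`k` word as a subsequence. -/
theorem stmt_0 (a k : ℕ) (ha : 1 ≤ a) (hk : 1 ≤ k) :
    (∀ S : List (Fin a),
      (∀ T : List (Fin a), T.length = k → T.Sublist S) → a * k ≤ S.length) ∧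
    ((List.replicate k (List.ofFn (fun i : Fin a => i))).flatten.length = a * k ∧
      ∀ T : List (Fin a), T.length = k →
        T.Sublist (List.replicate k (List.ofFn (fun i : Fin a => i))).flatten) :=
  stmt_0_general a k
end

section
/- The number of strings S of length n over an alphabet of size a that contain a fixed word T of length k as a subsequence equals sum_{i=k}^{n} C(n,i) (a-1)^{n-i}, and this count does not depend on the choice of T. -/
open Finset
open scoped Classical

/-!
Splitting a word `S` of length `n + 1` over an alphabet of size `q + 1` at its first letter `s`:
`t :: T` is a subsequence of `s :: S'` iff either `s = t` and `T` is a subsequence of `S'`, or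
`s ≠ t` and `t :: T` is a subsequence of `S'`. Hence the count `N(n, T)` satisfies
`N(n + 1, t :: T) = N(n, T) + q * N(n, t :: T)` and `N(n, []) = (q + 1) ^ n`. The partial binomial
sums `∑_{i=k}^{n} C(n,i) q^(n-i)` obey the same recursion by Pascal's rule, and the same initial
values by the binomial theorem; neither depends on the letters of `T`, only on its length.
-/

theorem sum_Icc_zero_choose_mul_pow (q n : ℕ) :
    ∑ i ∈ Icc 0 n, n.choose i * q ^ (n - i) = (q + 1) ^ n := by
  rw [← Nat.range_succ_eq_Icc_zero, add_comm q, add_pow]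
  simp [mul_comm]

theorem sum_Icc_succ_choose_mul_pow (q n k : ℕ) :
    ∑ i ∈ Icc (k + 1) (n + 1), (n + 1).choose i * q ^ (n + 1 - i)
      = ∑ i ∈ Icc k n, n.choose i * q ^ (n - i)
        + q * ∑ i ∈ Icc (k + 1) n, n.choose i * q ^ (n - i) := by
  have shift (f : ℕ → ℕ) : ∑ i ∈ Icc (k + 1) (n + 1), f i = ∑ i ∈ Icc k n, f (i + 1) := by
    rw [← map_add_right_Icc, sum_map]
    rfl
  have extend : ∑ i ∈ Icc (k + 1) n, n.choose i * q ^ (n - i)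
      = ∑ i ∈ Icc (k + 1) (n + 1), n.choose i * q ^ (n - i) := by
    refine sum_subset (Icc_subset_Icc_right n.le_succ) fun i hi hi' => ?_
    simp only [mem_Icc, not_and, not_le] at hi hi'
    rw [Nat.choose_eq_zero_of_lt (hi' hi.1), zero_mul]
  -- at `i = n` both sides vanish, as `C(n, n + 1) = 0`
  have pascal_tail (i : ℕ) (hi : i ≤ n) :
      n.choose (i + 1) * q ^ (n - i) = q * (n.choose (i + 1) * q ^ (n - (i + 1))) := by
    rcases hi.lt_or_eq with hi | rfl
    · rw [show n - i = n - (i + 1) + 1 by omega, pow_succ]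
      ring
    · simp
  rw [extend, shift, shift, mul_sum, ← sum_add_distrib]
  refine sum_congr rfl fun i hi => ?_
  rw [Nat.choose_succ_succ', add_mul, Nat.add_sub_add_right, pascal_tail i (mem_Icc.1 hi).2]

theorem List.cons_sublist_cons_iff_of_ne {α : Type*} {t s : α} {T L : List α} (h : s ≠ t) :
    (t :: T).Sublist (s :: L) ↔ (t :: T).Sublist L := by
  simp [List.cons_sublist_cons', Ne.symm h]

section Count

variable {α : Type*} [Fintype α]

theorem card_filter_ofFn_succ (P : List α → Prop) [DecidablePred P] (n : ℕ) :
    #{S : Fin (n + 1) → α | P (List.ofFn S)} = ∑ s, #{S : Fin n → α | P (s :: List.ofFn S)} := by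
  simp only [card_filter]
  rw [← (Fin.consEquiv fun _ => α).sum_comp, Fintype.sum_prod_type]
  simp only [Fin.consEquiv, Equiv.coe_fn_mk, List.ofFn_cons]

variable [DecidableEq α]

theorem card_sublist_ofFn_succ_cons (t : α) (T : List α) (n : ℕ) :
    #{S : Fin (n + 1) → α | (t :: T).Sublist (List.ofFn S)}
      = #{S : Fin n → α | T.Sublist (List.ofFn S)}
        + (Fintype.card α - 1) * #{S : Fin n → α | (t :: T).Sublist (List.ofFn S)} := by
  rw [card_filter_ofFn_succ, ← add_sum_erase _ _ (mem_univ t)]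
  simp only [List.cons_sublist_cons]
  rw [sum_congr rfl fun s hs => by
      rw [filter_congr fun S _ => List.cons_sublist_cons_iff_of_ne (ne_of_mem_erase hs)],
    sum_const, card_erase_of_mem (mem_univ t), card_univ, smul_eq_mul]

theorem card_sublist_ofFn [Nonempty α] (n : ℕ) (T : List α) :
    #{S : Fin n → α | T.Sublist (List.ofFn S)}
      = ∑ i ∈ Icc T.length n, n.choose i * (Fintype.card α - 1) ^ (n - i) := by
  induction n generalizing T with
  | zero => cases T <;> simp
  | succ n ih =>
    cases T with
    | nil =>
      simp [sum_Icc_zero_choose_mul_pow, Nat.sub_add_cancel Fintype.card_pos]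
    | cons t T =>
      rw [card_sublist_ofFn_succ_cons, ih, ih, List.length_cons, sum_Icc_succ_choose_mul_pow]

end Count

theorem stmt_3_general (a n k : ℕ) (ha : 2 ≤ a)
    (T : List (Fin a)) (hT : T.length = k) :
    (Finset.univ.filter (fun S : Fin n → Fin a => T.Sublist (List.ofFn S))).card
      = ∑ i ∈ Finset.Icc k n, n.choose i * (a - 1) ^ (n - i) := by
  have : NeZero a := ⟨by omega⟩
  rw [card_sublist_ofFn, hT, Fintype.card_fin]

/-- The number of strings of length `n` over an alphabet of size `a` containing a fixed word
`T` of length `k` as a subsequence equals `∑_{i=k}^{n} C(n,i) (a-1)^(n-i)`, independently of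
the choice of `T`. -/
theorem stmt_3 (a n k : ℕ) (ha : 2 ≤ a) (hk : 1 ≤ k) (hkn : k ≤ n)
    (T : List (Fin a)) (hT : T.length = k) :
    (Finset.univ.filter (fun S : Fin n → Fin a => T.Sublist (List.ofFn S))).card
      = ∑ i ∈ Finset.Icc k n, n.choose i * (a - 1) ^ (n - i) :=
  stmt_3_general a n k ha T hT
end

section
/- For all integers n ≥ k ≥ 1 and a ≥ 2, sum_{i=k}^{n} C(i-1, k-1) a^{n-i} (a-1)^{i-k} = sum_{i=k}^{n} C(n, i) (a-1)^{n-i}. -/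
/-!
Write `a = b + 1` and `k = t + 1`. As functions of `n`, both sides vanish for `n ≤ t` and satisfy
`S (n + 1) = (b + 1) * S n + C(n, t) * b ^ (n - t)`: on the left this is splitting off the last
term, on the right it is Pascal's rule `C(n+1, i+1) = C(n, i) + C(n, i+1)`.
-/

open Finset

variable {R : Type*} [CommSemiring R] (b : R) (t : ℕ)

theorem sum_Icc_add_one_add_one {M : Type*} [AddCommMonoid M] (f : ℕ → M) (m n : ℕ) :
    ∑ i ∈ Icc (m + 1) (n + 1), f i = ∑ j ∈ Icc m n, f (j + 1) := by
  rw [← map_add_right_Icc, sum_map]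
  rfl

theorem sum_Icc_choose_pred_mul_pow_succ {n : ℕ} (h : t ≤ n) :
    ∑ i ∈ Icc (t + 1) (n + 1), ((i - 1).choose t : R) * (b + 1) ^ (n + 1 - i) * b ^ (i - (t + 1))
      = (b + 1) * ∑ i ∈ Icc (t + 1) n, ((i - 1).choose t : R) * (b + 1) ^ (n - i) * b ^ (i - (t + 1))
        + n.choose t * b ^ (n - t) := by
  rw [sum_Icc_succ_top (by omega), mul_sum]
  congr 1
  · refine sum_congr rfl fun i hi => ?_
    rw [show n + 1 - i = n - i + 1 by grind, pow_succ]
    ring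
  · simp

theorem sum_Icc_choose_mul_pow_succ {n : ℕ} (h : t ≤ n) :
    ∑ i ∈ Icc (t + 1) (n + 1), ((n + 1).choose i : R) * b ^ (n + 1 - i)
      = (b + 1) * ∑ i ∈ Icc (t + 1) n, (n.choose i : R) * b ^ (n - i) + n.choose t * b ^ (n - t) := by
  have lower : ∑ j ∈ Icc t n, (n.choose j : R) * b ^ (n - j)
      = n.choose t * b ^ (n - t) + ∑ i ∈ Icc (t + 1) n, (n.choose i : R) * b ^ (n - i) := by
    rw [← insert_Icc_add_one_left_eq_Icc h, sum_insert (by simp)]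
  have upper : ∑ j ∈ Icc t n, (n.choose (j + 1) : R) * b ^ (n - j)
      = b * ∑ i ∈ Icc (t + 1) n, (n.choose i : R) * b ^ (n - i) := by
    have shift := sum_Icc_add_one_add_one (fun i => (n.choose i : R) * b ^ (n + 1 - i)) t n
    simp only [Nat.add_sub_add_right] at shift
    rw [← shift, sum_Icc_succ_top (by omega), Nat.choose_succ_self, mul_sum]
    simp only [Nat.cast_zero, zero_mul, add_zero]
    refine sum_congr rfl fun i hi => ?_
    rw [show n + 1 - i = n - i + 1 by grind, pow_succ]
    ring
  simp only [sum_Icc_add_one_add_one (fun i => ((n + 1).choose i : R) * b ^ (n + 1 - i)),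
    Nat.choose_succ_succ', Nat.cast_add, add_mul, sum_add_distrib, Nat.reduceSubDiff, lower, upper]
  ring

theorem sum_Icc_choose_pred_mul_pow_eq_sum_Icc_choose_mul_pow (n : ℕ) :
    ∑ i ∈ Icc (t + 1) n, ((i - 1).choose t : R) * (b + 1) ^ (n - i) * b ^ (i - (t + 1))
      = ∑ i ∈ Icc (t + 1) n, (n.choose i : R) * b ^ (n - i) := by
  induction n with
  | zero => simp
  | succ n ih =>
    rcases le_or_gt t n with h | h
    · rw [sum_Icc_choose_pred_mul_pow_succ b t h, sum_Icc_choose_mul_pow_succ b t h, ih]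
    · simp [Icc_eq_empty_of_lt (show n + 1 < t + 1 by omega)]

theorem stmt_4_general (a n k : ℕ) (ha : 2 ≤ a) (hk : 1 ≤ k) :
    ∑ i ∈ Finset.Icc k n, (i - 1).choose (k - 1) * a ^ (n - i) * (a - 1) ^ (i - k)
      = ∑ i ∈ Finset.Icc k n, n.choose i * (a - 1) ^ (n - i) := by
  obtain ⟨t, rfl⟩ : ∃ t, k = t + 1 := ⟨k - 1, by omega⟩
  obtain ⟨b, rfl⟩ : ∃ b, a = b + 1 := ⟨a - 1, by omega⟩
  simpa using sum_Icc_choose_pred_mul_pow_eq_sum_Icc_choose_mul_pow b t n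

/-- For `n ≥ k ≥ 1` and `a ≥ 2`:
`∑_{i=k}^{n} C(i-1,k-1) a^(n-i) (a-1)^(i-k) = ∑_{i=k}^{n} C(n,i) (a-1)^(n-i)`. -/
theorem stmt_4 (a n k : ℕ) (ha : 2 ≤ a) (hk : 1 ≤ k) (hkn : k ≤ n) :
    ∑ i ∈ Finset.Icc k n, (i - 1).choose (k - 1) * a ^ (n - i) * (a - 1) ^ (i - k)
      = ∑ i ∈ Finset.Icc k n, n.choose i * (a - 1) ^ (n - i) :=
  stmt_4_general a n k ha hk
end

section
/- Fix a ≥ 2 and a constant r > a·H_a. If n = ⌊rk⌋, then the probability that a uniformly random string of length n over [a] is k-omni tends to 1 as k → ∞. -/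
/-!
Cut a string greedily into rounds, a round ending as soon as all `a` letters have occurred in it.
A string with at least `k` complete rounds is `k`-omni: the `i`-th letter of any word is found
in the `i`-th round. With `w s = ∏_{i<s} (1 - aδ/(a-i))` and `β = w a`, the quantity
`β ^ (completed rounds) * w (letters seen in the current round)` shrinks by exactly the factor
`1 - δ` in expectation at every letter, so by Markov's inequality at most a fraction
`(1 - δ)^n / β^k` of the strings of length `n` have fewer than `k` rounds. The Weierstrass
product inequality gives `β ≥ 1 - δ a H_a`, which exceeds `e^{-δ r}` for small `δ > 0` when
`r > a H_a`; as `(1 - δ)^⌊rk⌋ ≤ e^δ (e^{-δ r})^k`, the failure fraction decays geometrically in `k`.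
-/

open Finset Filter Real
open scoped Classical

namespace Omni

section WeightedRun

variable {α σ R : Type*} [Fintype α] [CommSemiring R] (step : σ → α → σ) (g : σ → α → R)

def runWeight : σ → List α → R
  | _, [] => 1
  | A, c :: l => g A c * runWeight (step A c) l

theorem sum_runWeight_mul_foldl {P : σ → Prop} (hP : ∀ A c, P A → P (step A c))
    {h : σ → R} {μ : R} (heig : ∀ A, P A → ∑ c, g A c * h (step A c) = μ * h A) :
    ∀ (n : ℕ) {A : σ}, P A →
      ∑ S : Fin n → α, runWeight step g A (List.ofFn S) * h ((List.ofFn S).foldl step A)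
        = μ ^ n * h A
  | 0, A, _ => by simp [runWeight]
  | n + 1, A, hA => by
    rw [← (Fin.consEquiv fun _ => α).sum_comp, Fintype.sum_prod_type]
    simp only [Fin.consEquiv, Equiv.coe_fn_mk, List.ofFn_cons, runWeight, List.foldl_cons,
      mul_assoc, ← mul_sum, sum_runWeight_mul_foldl hP heig n (hP A _ hA)]
    simp_rw [mul_left_comm (g A _), ← mul_sum, heig A hA]
    ring

end WeightedRun

section Rounds

variable {a : ℕ}

def collect (A : Finset (Fin a)) (c : Fin a) : Finset (Fin a) :=
  if c ∈ A then A else if A.card + 1 = a then ∅ else insert c A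

def endsRound (A : Finset (Fin a)) (c : Fin a) : ℕ :=
  if c ∉ A ∧ A.card + 1 = a then 1 else 0

def rounds : Finset (Fin a) → List (Fin a) → ℕ
  | _, [] => 0
  | A, c :: l => endsRound A c + rounds (collect A c) l

theorem card_collect_lt {A : Finset (Fin a)} (hA : A.card < a) (c : Fin a) :
    (collect A c).card < a := by
  unfold collect
  split_ifs with hc
  · exact hA
  · rw [card_empty]; omega
  · rw [card_insert_of_notMem hc]; omega

theorem exists_append_of_rounds_pos {A : Finset (Fin a)} {l : List (Fin a)}
    (h : 0 < rounds A l) :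
    ∃ l₁ l₂, l = l₁ ++ l₂ ∧ (∀ x ∉ A, x ∈ l₁) ∧ rounds A l = rounds ∅ l₂ + 1 := by
  induction l generalizing A with
  | nil => simp [rounds] at h
  | cons c l ih =>
    by_cases hend : c ∉ A ∧ A.card + 1 = a
    · refine ⟨[c], l, rfl, fun x hx => ?_, ?_⟩
      · have : Aᶜ.card ≤ 1 := by rw [card_compl, Fintype.card_fin]; omega
        simp [card_le_one.1 this x (by simpa) c (by simpa using hend.1)]
      · simp [rounds, endsRound, collect, hend, add_comm]
    · have hr : rounds A (c :: l) = rounds (collect A c) l := by simp [rounds, endsRound, hend]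
      obtain ⟨l₁, l₂, rfl, hmem, hl₂⟩ := ih (hr ▸ h)
      refine ⟨c :: l₁, l₂, rfl, fun x hx => ?_, hr.trans hl₂⟩
      by_cases hxc : x = c
      · simp [hxc]
      · exact List.mem_cons_of_mem c (hmem x (by unfold collect; split_ifs <;> simp_all))

theorem sublist_of_length_le_rounds {T l : List (Fin a)} (h : T.length ≤ rounds ∅ l) :
    T.Sublist l := by
  induction T generalizing l with
  | nil => exact List.nil_sublist l
  | cons t T ih =>
    rw [List.length_cons] at h
    obtain ⟨l₁, l₂, rfl, hmem, hl₂⟩ := exists_append_of_rounds_pos (by omega : 0 < rounds ∅ l)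
    exact (List.singleton_sublist.2 (hmem t (notMem_empty t))).append (ih (by omega))

def IsOmni {α : Type*} (k : ℕ) (l : List α) : Prop :=
  ∀ T : List α, T.length = k → T.Sublist l

theorem isOmni_of_le_rounds {k : ℕ} {l : List (Fin a)} (h : k ≤ rounds ∅ l) : IsOmni k l :=
  fun _ hT => sublist_of_length_le_rounds (hT ▸ h)

end Rounds

section RoundWeight

variable {a : ℕ} {δ : ℝ}

noncomputable def roundWeight (a : ℕ) (δ : ℝ) (s : ℕ) : ℝ :=
  ∏ i ∈ range s, (1 - a * δ / (a - i))

theorem roundFactor_pos_le_one (hδ : 0 ≤ δ) (haδ : a * δ < 1) {i : ℕ} (hi : i < a) :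
    0 < 1 - a * δ / (a - i) ∧ 1 - a * δ / (a - i) ≤ 1 := by
  have hai : (1 : ℝ) ≤ a - i := by
    have : (i : ℝ) + 1 ≤ a := by exact_mod_cast hi
    linarith
  have : a * δ / (a - i) ≤ a * δ := div_le_self (by positivity) hai
  constructor <;> [linarith; linarith [show 0 ≤ a * δ / (a - i) by positivity]]

theorem roundWeight_pos (hδ : 0 ≤ δ) (haδ : a * δ < 1) {s : ℕ} (hs : s ≤ a) :
    0 < roundWeight a δ s :=
  prod_pos fun _ hi => (roundFactor_pos_le_one hδ haδ ((mem_range.1 hi).trans_le hs)).1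

theorem roundWeight_le_of_le (hδ : 0 ≤ δ) (haδ : a * δ < 1) {s t : ℕ} (hst : s ≤ t)
    (ht : t ≤ a) : roundWeight a δ t ≤ roundWeight a δ s := by
  rw [roundWeight, ← prod_range_mul_prod_Ico _ hst]
  have hfac : ∀ i ∈ Ico s t, 0 < 1 - a * δ / (a - i) ∧ 1 - a * δ / (a - i) ≤ 1 :=
    fun i hi => roundFactor_pos_le_one hδ haδ ((mem_Ico.1 hi).2.trans_le ht)
  exact mul_le_of_le_one_right (roundWeight_pos hδ haδ (hst.trans ht)).le
    (prod_le_one (fun i hi => (hfac i hi).1.le) fun i hi => (hfac i hi).2)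

theorem roundWeight_eigen {s : ℕ} (hs : s < a) :
    s * roundWeight a δ s + (a - s) * roundWeight a δ (s + 1)
      = a * (1 - δ) * roundWeight a δ s := by
  have : (a : ℝ) - s ≠ 0 := by
    have : (s : ℝ) + 1 ≤ a := by exact_mod_cast hs
    linarith
  simp only [roundWeight, prod_range_succ]
  field_simp
  ring

theorem sum_roundWeight_collect {A : Finset (Fin a)} (hA : A.card < a) :
    ∑ c, roundWeight a δ a ^ endsRound A c * roundWeight a δ (collect A c).card
      = a * (1 - δ) * roundWeight a δ A.card := by
  have hseen : ∀ c ∈ A,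
      roundWeight a δ a ^ endsRound A c * roundWeight a δ (collect A c).card
        = roundWeight a δ A.card := by
    intro c hc
    simp [endsRound, collect, hc]
  have hnew : ∀ c ∉ A,
      roundWeight a δ a ^ endsRound A c * roundWeight a δ (collect A c).card
        = roundWeight a δ (A.card + 1) := by
    intro c hc
    -- a completed round resets the state to `∅` but contributes the factor `roundWeight a δ a`
    by_cases hend : A.card + 1 = a
    · simp [endsRound, collect, hc, hend, roundWeight]
    · simp [endsRound, collect, hc, hend, card_insert_of_notMem hc]
  have hAc : (Aᶜ.card : ℝ) = a - A.card := by
    rw [card_compl, Fintype.card_fin, Nat.cast_sub hA.le]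
  rw [← sum_add_sum_compl A, sum_congr rfl hseen,
    sum_congr rfl fun c hc => hnew c (mem_compl.1 hc), sum_const, sum_const, nsmul_eq_mul,
    nsmul_eq_mul, hAc, roundWeight_eigen hA]

theorem runWeight_collect_eq_pow_rounds (β : ℝ) (A : Finset (Fin a)) (l : List (Fin a)) :
    runWeight collect (fun A c => β ^ endsRound A c) A l = β ^ rounds A l := by
  induction l generalizing A with
  | nil => simp [runWeight, rounds]
  | cons c l ih => simp [runWeight, rounds, ih, pow_add]

theorem sum_pow_rounds_mul_roundWeight (ha : 0 < a) (n : ℕ) :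
    ∑ S : Fin n → Fin a, roundWeight a δ a ^ rounds ∅ (List.ofFn S)
        * roundWeight a δ ((List.ofFn S).foldl collect ∅).card
      = (a * (1 - δ)) ^ n := by
  have h := sum_runWeight_mul_foldl collect (fun A c => roundWeight a δ a ^ endsRound A c)
    (P := fun A => A.card < a) (h := fun A => roundWeight a δ A.card)
    (fun A c hA => card_collect_lt hA c) (fun A hA => sum_roundWeight_collect hA) n
    (A := ∅) (by simpa using ha)
  simpa only [runWeight_collect_eq_pow_rounds, card_empty, roundWeight, prod_range_zero,
    mul_one] using h

theorem card_rounds_lt_mul_pow_le (ha : 0 < a) (hδ : 0 ≤ δ) (haδ : a * δ < 1) (n k : ℕ) :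
    (#{S : Fin n → Fin a | rounds ∅ (List.ofFn S) < k} : ℝ) * roundWeight a δ a ^ k
      ≤ (a * (1 - δ)) ^ n := by
  set β := roundWeight a δ a
  have hβ : 0 < β := roundWeight_pos hδ haδ le_rfl
  have hw (S : Fin n → Fin a) :
      β ≤ roundWeight a δ ((List.ofFn S).foldl collect ∅).card :=
    roundWeight_le_of_le hδ haδ ((card_le_univ _).trans_eq (Fintype.card_fin a)) le_rfl
  calc (#{S : Fin n → Fin a | rounds ∅ (List.ofFn S) < k} : ℝ) * β ^ k
      = ∑ S with rounds ∅ (List.ofFn S) < k, β ^ k := by rw [sum_const, nsmul_eq_mul]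
    _ ≤ ∑ S with rounds ∅ (List.ofFn S) < k,
          β ^ rounds ∅ (List.ofFn S) * roundWeight a δ ((List.ofFn S).foldl collect ∅).card := by
      refine sum_le_sum fun S hS => ?_
      calc β ^ k ≤ β ^ (rounds ∅ (List.ofFn S) + 1) :=
            pow_le_pow_of_le_one hβ.le (roundWeight_le_of_le hδ haδ (Nat.zero_le a) le_rfl)
              (mem_filter.1 hS).2
        _ ≤ _ := by rw [pow_succ]; exact mul_le_mul_of_nonneg_left (hw S) (by positivity)
    _ ≤ ∑ S : Fin n → Fin a,
          β ^ rounds ∅ (List.ofFn S) * roundWeight a δ ((List.ofFn S).foldl collect ∅).card :=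
      sum_le_sum_of_subset_of_nonneg (subset_univ _) fun S _ _ =>
        mul_nonneg (by positivity) (hβ.le.trans (hw S))
    _ = (a * (1 - δ)) ^ n := sum_pow_rounds_mul_roundWeight ha n

theorem one_sub_div_le_card_isOmni_div (ha : 0 < a) (hδ : 0 ≤ δ) (haδ : a * δ < 1) (n k : ℕ) :
    1 - (1 - δ) ^ n / roundWeight a δ a ^ k
      ≤ (#{S : Fin n → Fin a | IsOmni k (List.ofFn S)} : ℝ) / a ^ n := by
  have hβ : 0 < roundWeight a δ a ^ k := pow_pos (roundWeight_pos hδ haδ le_rfl) k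
  have hcover : a ^ n ≤ #{S : Fin n → Fin a | IsOmni k (List.ofFn S)}
      + #{S : Fin n → Fin a | rounds ∅ (List.ofFn S) < k} := by
    calc a ^ n = #(univ : Finset (Fin n → Fin a)) := by simp
      _ ≤ _ := card_le_card fun S _ => ?_
      _ ≤ _ := card_union_le _ _
    simp only [mem_union, mem_filter, mem_univ, true_and]
    exact (le_or_gt k _).imp_left isOmni_of_le_rounds
  have hbad : (#{S : Fin n → Fin a | rounds ∅ (List.ofFn S) < k} : ℝ)
      ≤ a ^ n * ((1 - δ) ^ n / roundWeight a δ a ^ k) := by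
    rw [mul_div_assoc', le_div_iff₀ hβ, ← mul_pow]
    exact card_rounds_lt_mul_pow_le ha hδ haδ n k
  have hcover' : (a : ℝ) ^ n ≤ #{S : Fin n → Fin a | IsOmni k (List.ofFn S)}
      + #{S : Fin n → Fin a | rounds ∅ (List.ofFn S) < k} := by exact_mod_cast hcover
  rw [le_div_iff₀ (by positivity)]
  linarith

end RoundWeight

theorem one_sub_sum_le_prod_one_sub {ι R : Type*} [CommRing R] [LinearOrder R]
    [IsStrictOrderedRing R] (s : Finset ι) {f : ι → R} (h0 : ∀ i ∈ s, 0 ≤ f i)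
    (h1 : ∀ i ∈ s, f i ≤ 1) : 1 - ∑ i ∈ s, f i ≤ ∏ i ∈ s, (1 - f i) := by
  induction s using Finset.induction_on with
  | empty => simp
  | insert x s hx ih =>
    rw [sum_insert hx, prod_insert hx]
    have hx0 := h0 x (mem_insert_self x s)
    have hx1 := h1 x (mem_insert_self x s)
    have hs := ih (fun i hi => h0 i (mem_insert_of_mem hi)) fun i hi => h1 i (mem_insert_of_mem hi)
    have hsum := sum_nonneg fun i hi => h0 i (mem_insert_of_mem hi)
    nlinarith

theorem sum_range_one_div_sub_eq_sum_Icc (a : ℕ) :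
    ∑ i ∈ range a, 1 / ((a : ℝ) - i) = ∑ j ∈ Icc 1 a, 1 / (j : ℝ) := by
  refine sum_nbij' (a - ·) (a - ·) ?_ ?_ ?_ ?_ fun i hi => ?_
  any_goals intro i hi; simp only [mem_range, mem_Icc] at hi ⊢; omega
  rw [Nat.cast_sub (mem_range.1 hi).le]

theorem exists_exp_neg_lt_roundWeight {a : ℕ} (ha : 0 < a) {r : ℝ}
    (hr : a * ∑ i ∈ Icc 1 a, (1 : ℝ) / i < r) :
    ∃ δ : ℝ, 0 < δ ∧ a * δ < 1 ∧ exp (-(δ * r)) < roundWeight a δ a := by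
  set μ := a * ∑ i ∈ Icc 1 a, (1 : ℝ) / i
  have hH : 1 ≤ ∑ i ∈ Icc 1 a, (1 : ℝ) / i := by
    simpa using single_le_sum (f := fun i : ℕ => (1 : ℝ) / i) (fun i _ => by positivity)
      (mem_Icc.2 ⟨le_rfl, ha⟩)
  have haμ : (a : ℝ) ≤ μ := le_mul_of_one_le_right (Nat.cast_nonneg a) hH
  have hμ : 0 < μ := lt_of_lt_of_le (by exact_mod_cast ha) haμ
  have hr0 : 0 < r := hμ.trans hr
  set δ := (r - μ) / (2 * μ * r) with hδdef
  have hδ : 0 < δ := div_pos (by linarith) (by positivity)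
  have hμδr : μ * δ * r = (r - μ) / 2 := by rw [hδdef]; field_simp
  have hμδ : μ * δ < 1 := by nlinarith
  have haδ : a * δ < 1 := (mul_le_mul_of_nonneg_right haμ hδ.le).trans_lt hμδ
  have hfac (i : ℕ) (hi : i ∈ range a) := roundFactor_pos_le_one hδ.le haδ (mem_range.1 hi)
  have hsum : ∑ i ∈ range a, a * δ / (a - i) = μ * δ := by
    simp_rw [← mul_one_div (a * δ), ← mul_sum, sum_range_one_div_sub_eq_sum_Icc, μ]
    ring
  have hlow : 1 - μ * δ ≤ roundWeight a δ a := hsum ▸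
    one_sub_sum_le_prod_one_sub (range a) (fun i hi => by linarith [hfac i hi])
      fun i hi => by linarith [hfac i hi]
  refine ⟨δ, hδ, haδ, lt_of_lt_of_le ?_ hlow⟩
  calc exp (-(δ * r)) = (exp (δ * r))⁻¹ := exp_neg _
    _ ≤ (1 + δ * r)⁻¹ := inv_anti₀ (by positivity) (by linarith [add_one_le_exp (δ * r)])
    _ < 1 - μ * δ := by
      rw [inv_lt_iff_one_lt_mul₀ (by positivity)]
      nlinarith

theorem one_sub_pow_floor_le {δ : ℝ} (hδ₀ : 0 ≤ δ) (hδ₁ : δ ≤ 1) (r : ℝ) (k : ℕ) :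
    (1 - δ) ^ ⌊r * k⌋₊ ≤ exp δ * exp (-(δ * r)) ^ k := calc
  (1 - δ) ^ ⌊r * k⌋₊ ≤ exp (-δ) ^ ⌊r * k⌋₊ :=
      pow_le_pow_left₀ (by linarith) (by linarith [add_one_le_exp (-δ)]) _
  _ = exp (⌊r * k⌋₊ * -δ) := (exp_nat_mul _ _).symm
  _ ≤ exp (δ + k * -(δ * r)) := by
      have := mul_le_mul_of_nonneg_left (Nat.lt_floor_add_one (r * k)).le hδ₀
      gcongr
      linarith
  _ = exp δ * exp (-(δ * r)) ^ k := by rw [exp_add, exp_nat_mul]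

end Omni

/-- For fixed `a ≥ 2` and a constant `r > a H_a`, with `n = ⌊r k⌋`, the probability that a
uniformly random string of length `n` over `Fin a` is `k`-omni tends to `1` as `k → ∞`. -/
theorem stmt_12 (a : ℕ) (ha : 2 ≤ a) (r : ℝ)
    (hr : (a : ℝ) * ∑ i ∈ Finset.Icc 1 a, (1 : ℝ) / i < r) :
    Tendsto (fun k : ℕ =>
        ((Finset.univ.filter (fun S : Fin ⌊r * k⌋₊ → Fin a =>
            ∀ T : List (Fin a), T.length = k → T.Sublist (List.ofFn S))).card : ℝ)
          / (a : ℝ) ^ (⌊r * k⌋₊))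
      atTop (nhds 1) := by
  have ha₀ : 0 < a := by omega
  obtain ⟨δ, hδ, haδ, hlt⟩ := Omni.exists_exp_neg_lt_roundWeight ha₀ hr
  set β := Omni.roundWeight a δ a
  have hβ : 0 < β := (exp_pos _).trans hlt
  have hδ₁ : δ ≤ 1 := by nlinarith [show (1 : ℝ) ≤ a by exact_mod_cast ha₀]
  set q := exp (-(δ * r)) / β
  have hlower (k : ℕ) := calc
    1 - exp δ * q ^ k ≤ 1 - (1 - δ) ^ ⌊r * k⌋₊ / β ^ k := by
      rw [div_pow, mul_div_assoc']
      gcongr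
      exact Omni.one_sub_pow_floor_le hδ.le hδ₁ r k
    _ ≤ _ := Omni.one_sub_div_le_card_isOmni_div ha₀ hδ.le haδ _ k
  have hq : Tendsto (fun k : ℕ => 1 - exp δ * q ^ k) atTop (nhds 1) := by
    simpa using ((tendsto_pow_atTop_nhds_zero_of_lt_one (by positivity)
      ((div_lt_one hβ).2 hlt)).const_mul (exp δ)).const_sub 1
  refine tendsto_of_tendsto_of_tendsto_of_le_of_le hq tendsto_const_nhds hlower fun k =>
    div_le_one_of_le₀ ?_ (by positivity)
  norm_cast
  exact (card_filter_le _ _).trans_eq (by simp)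
end

section
/- Let M_{k,a}(S) be the number of length-k words over [a] that are not subsequences of a uniformly random string S of length n. Then E(M_{k,a}(S)) = a^k · sum_{j=0}^{k-1} C(n,j) (1/a)^j ((a-1)/a)^{n-j}. -/
open Finset
open scoped Classical

private def Fct (a n k : ℕ) : ℕ := ∑ j ∈ Finset.range k, n.choose j * (a-1)^(n-j)

private lemma Fct_rec (a n k : ℕ) :
    Fct a (n+1) (k+1) = Fct a n k + (a-1) * Fct a n (k+1) := by
  unfold Fct
  rw [Finset.sum_range_succ' (fun j => (n+1).choose j * (a-1)^(n+1-j)) k]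
  rw [Finset.mul_sum, Finset.sum_range_succ' (fun j => (a-1) * (n.choose j * (a-1)^(n-j))) k]
  have h0 : (n+1).choose 0 * (a-1)^(n+1-0) = (a-1) * (n.choose 0 * (a-1)^(n-0)) := by
    simp [pow_succ, mul_comm]
  rw [h0]
  have h1 : ∀ j ∈ Finset.range k, (n+1).choose (j+1) * (a-1)^(n+1-(j+1))
      = n.choose j * (a-1)^(n-j) + (a-1) * (n.choose (j+1) * (a-1)^(n-(j+1))) := by
    intro j _
    rw [Nat.choose_succ_succ, add_mul, Nat.succ_sub_succ]
    congr 1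
    rcases le_or_gt (j+1) n with h | h
    · have : n - j = (n - (j+1)) + 1 := by omega
      rw [this, pow_succ]; ring
    · have : n.choose (j+1) = 0 := Nat.choose_eq_zero_of_lt h
      simp [this]
  rw [Finset.sum_congr rfl h1, Finset.sum_add_distrib]
  ring

private lemma count_lemma (a : ℕ) : ∀ (n : ℕ) (t : List (Fin a)),
    (Finset.univ.filter (fun s : Fin n → Fin a => ¬ t.Sublist (List.ofFn s))).card
      = Fct a n t.length := by
  intro n
  induction n with
  | zero =>
    intro t
    cases t with
    | nil => simp [Fct]
    | cons c t' =>
      have : (Finset.univ.filter (fun s : Fin 0 → Fin a =>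
          ¬ (c :: t').Sublist (List.ofFn s))) = Finset.univ := by
        apply Finset.filter_true_of_mem
        intro s _
        simp
      rw [this]
      simp only [Finset.card_univ, Fintype.card_fun, Fintype.card_fin, pow_zero]
      unfold Fct
      rw [List.length_cons]
      rw [Finset.sum_eq_single 0]
      · simp
      · intro j _ hj
        have : (0:ℕ).choose j = 0 := Nat.choose_eq_zero_of_lt (Nat.pos_of_ne_zero hj)
        simp [this]
      · simp
  | succ n ih =>
    intro t
    cases t with
    | nil =>
      have : (Finset.univ.filter (fun s : Fin (n+1) → Fin a =>
          ¬ ([] : List (Fin a)).Sublist (List.ofFn s))) = ∅ := by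
        apply Finset.filter_false_of_mem
        intro s _
        simp
      rw [this]; simp [Fct]
    | cons c t' =>
      -- decompose over the first character
      have hcard : (Finset.univ.filter (fun s : Fin (n+1) → Fin a =>
          ¬ (c :: t').Sublist (List.ofFn s))).card
          = ∑ x : Fin a, (Finset.univ.filter (fun s : Fin n → Fin a =>
              ¬ (c :: t').Sublist (x :: List.ofFn s))).card := by
        simp only [Finset.card_filter]
        rw [← Fintype.sum_equiv (Fin.consEquiv (fun _ : Fin (n+1) => Fin a))
            (fun p : Fin a × (Fin n → Fin a) =>
              if ¬ (c :: t').Sublist (p.1 :: List.ofFn p.2) then 1 else 0)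
            (fun s : Fin (n+1) → Fin a =>
              if ¬ (c :: t').Sublist (List.ofFn s) then 1 else 0)]
        · rw [Fintype.sum_prod_type]
        · intro p
          congr 2
          rw [List.ofFn_succ]
          simp [Fin.consEquiv]
      rw [hcard]
      have hsplit : ∀ x : Fin a, (Finset.univ.filter (fun s : Fin n → Fin a =>
          ¬ (c :: t').Sublist (x :: List.ofFn s))).card
          = if x = c then Fct a n t'.length else Fct a n (c :: t').length := by
        intro x
        by_cases hx : x = c
        · subst hx
          rw [if_pos rfl, ← ih t']
          congr 1
          apply Finset.filter_congr
          intro s _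
          constructor
          · intro h ht'
            exact h (List.cons_sublist_cons.mpr ht')
          · intro h hsub
            rcases List.cons_sublist_cons'.mp hsub with h1 | h1
            · exact h ((List.sublist_cons_self _ t').trans h1)
            · exact h h1.2
        · rw [if_neg hx, ← ih (c :: t')]
          congr 1
          apply Finset.filter_congr
          intro s _
          constructor
          · intro h hsub
            exact h (hsub.cons x)
          · intro h hsub
            rcases List.cons_sublist_cons'.mp hsub with h1 | h1
            · exact h h1
            · exact absurd h1.1.symm hx
      rw [Finset.sum_congr rfl (fun x _ => hsplit x)]
      rw [Finset.sum_eq_sum_sdiff_singleton_add (Finset.mem_univ c)]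
      rw [if_pos rfl]
      have hB : ∑ x ∈ Finset.univ \ {c}, (if x = c then Fct a n t'.length
          else Fct a n (c :: t').length) = (a - 1) * Fct a n (c :: t').length := by
        rw [Finset.sum_congr rfl (fun x hx => if_neg (by
          simp only [Finset.mem_sdiff, Finset.mem_singleton] at hx; exact hx.2))]
        rw [Finset.sum_const, Finset.card_sdiff_of_subset (Finset.subset_univ _)]
        simp [mul_comm]
      rw [hB, List.length_cons, Fct_rec]
      ring

/-- The expected number of length-`k` words over `Fin a` missing from (i.e. not occurring as
a subsequence of) a uniformly random string of length `n` equals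
`a^k ∑_{j=0}^{k-1} C(n,j) (1/a)^j ((a-1)/a)^(n-j)`. -/
theorem stmt_14 (a n k : ℕ) (ha : 2 ≤ a) :
    (∑ S : Fin n → Fin a,
        ((Finset.univ.filter (fun T : Fin k → Fin a =>
            ¬ (List.ofFn T).Sublist (List.ofFn S))).card : ℝ)) / (a : ℝ) ^ n
      = (a : ℝ) ^ k * ∑ j ∈ Finset.range k,
          (n.choose j : ℝ) * (1 / a) ^ j * ((a - 1) / a) ^ (n - j) := by
  have ha0 : (0:ℝ) < (a:ℝ) := by
    have : 0 < a := by omega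
    exact_mod_cast this
  have hnat : ∑ S : Fin n → Fin a,
      (Finset.univ.filter (fun T : Fin k → Fin a =>
          ¬ (List.ofFn T).Sublist (List.ofFn S))).card = a^k * Fct a n k := by
    calc ∑ S : Fin n → Fin a,
        (Finset.univ.filter (fun T : Fin k → Fin a =>
            ¬ (List.ofFn T).Sublist (List.ofFn S))).card
        = ∑ S : Fin n → Fin a, ∑ T : Fin k → Fin a,
            if ¬ (List.ofFn T).Sublist (List.ofFn S) then 1 else 0 := by
          simp [Finset.card_filter]
      _ = ∑ T : Fin k → Fin a, ∑ S : Fin n → Fin a,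
            if ¬ (List.ofFn T).Sublist (List.ofFn S) then 1 else 0 := Finset.sum_comm
      _ = ∑ T : Fin k → Fin a,
            (Finset.univ.filter (fun S : Fin n → Fin a =>
              ¬ (List.ofFn T).Sublist (List.ofFn S))).card := by
          simp [Finset.card_filter]
      _ = ∑ _T : Fin k → Fin a, Fct a n k := by
          refine Finset.sum_congr rfl (fun T _ => ?_)
          rw [count_lemma a n (List.ofFn T), List.length_ofFn]
      _ = a^k * Fct a n k := by
          simp [Finset.card_univ, mul_comm]
  rw [← Nat.cast_sum, hnat]
  have hcast : ((a^k * Fct a n k : ℕ) : ℝ)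
      = (a:ℝ)^k * ∑ j ∈ Finset.range k, (n.choose j : ℝ) * ((a:ℝ)-1)^(n-j) := by
    unfold Fct
    push_cast [Nat.cast_sub (by omega : 1 ≤ a)]
    ring
  rw [hcast, mul_div_assoc, Finset.sum_div]
  congr 1
  refine Finset.sum_congr rfl (fun j hj => ?_)
  rcases le_or_gt j n with h | h
  · have hn : n = j + (n - j) := by omega
    rw [div_pow, div_pow, one_pow]
    rw [show (a:ℝ)^n = (a:ℝ)^j * (a:ℝ)^(n-j) by rw [← pow_add, ← hn]]
    field_simp
  · have : n.choose j = 0 := Nat.choose_eq_zero_of_lt h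
    simp [this]
end

section
/- Define D(a,r) = (a-1)^{r-1} r^r / (a^{r-1} (r-1)^{r-1}) for real r > 1 and integer a ≥ 2, and let r(a) be the solution of D(a, r(a)) = 1 with r(a) > 1. Then for all sufficiently large a, a(log a + log log a) < r(a) < a(log a + log log a + 2); consequently r(a)/(a·H_a) → 1 as a → ∞. -/
/-!
Taking logarithms, `D(a, s) = 1` reads
`log s = (s - 1) log (a / (a - 1)) - (s - 1) log (s / (s - 1))`, and the elementary bounds
`1/(x+1) ≤ log (1 + 1/x) ≤ 1/x` turn it into `(s - 1)/a - 1 ≤ log s ≤ (s - 1)/(a - 1)`.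
By concavity of `log`, the right-hand estimate pushes `s` beyond every `L > 1` with
`log L > (L - 1)/(a - 1)`, and the left-hand one keeps `s` below every `U ≥ a` with
`log U < (U - 1)/a - 1`. Both `L = a (log a + log log a)` and `U = a (log a + log log a + 2)`
qualify once `a ≥ e^16`. Since moreover `H_a ~ log a`, we get `r(a) ~ a log a ~ a H_a`.
-/

open Filter Real Asymptotics

noncomputable def missingWordsGrowthBase (a s : ℝ) : ℝ :=
  (a - 1) ^ (s - 1) * s ^ s / (a ^ (s - 1) * (s - 1) ^ (s - 1))

lemma log_eq_of_missingWordsGrowthBase_eq_one {a s : ℝ} (ha : 1 < a) (hs : 1 < s)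
    (h : missingWordsGrowthBase a s = 1) :
    log s = (s - 1) * log (a / (a - 1)) - (s - 1) * log (s / (s - 1)) := by
  have ha₀ : 0 < a := by linarith
  have ha₁ : 0 < a - 1 := by linarith
  have hs₀ : 0 < s := by linarith
  have hs₁ : 0 < s - 1 := by linarith
  rw [missingWordsGrowthBase, div_eq_one_iff_eq (by positivity)] at h
  have hlog := congrArg log h
  rw [log_mul (by positivity) (by positivity), log_mul (by positivity) (by positivity),
    log_rpow ha₁, log_rpow hs₀, log_rpow ha₀, log_rpow hs₁] at hlog
  rw [log_div ha₀.ne' ha₁.ne', log_div hs₀.ne' hs₁.ne']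
  linarith

lemma log_le_of_missingWordsGrowthBase_eq_one {a s : ℝ} (ha : 1 < a) (hs : 1 < s)
    (h : missingWordsGrowthBase a s = 1) : log s ≤ (s - 1) / (a - 1) := by
  have hlogA : log (a / (a - 1)) ≤ 1 / (a - 1) := by
    have := log_le_sub_one_of_pos (show 0 < a / (a - 1) by apply div_pos <;> linarith)
    rwa [div_sub_one (by linarith), sub_sub_cancel] at this
  have hlogs : 0 ≤ log (s / (s - 1)) :=
    log_nonneg ((one_le_div (by linarith)).2 (by linarith))
  have hs₁ : 0 ≤ s - 1 := by linarith
  rw [log_eq_of_missingWordsGrowthBase_eq_one ha hs h]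
  linarith [mul_le_mul_of_nonneg_left hlogA hs₁, mul_nonneg hs₁ hlogs,
    mul_one_div (s - 1) (a - 1)]

lemma le_log_of_missingWordsGrowthBase_eq_one {a s : ℝ} (ha : 1 < a) (hs : 1 < s)
    (h : missingWordsGrowthBase a s = 1) : (s - 1) / a - 1 ≤ log s := by
  have hlogA : 1 / a ≤ log (a / (a - 1)) := by
    have := one_sub_inv_le_log_of_pos (show 0 < a / (a - 1) by apply div_pos <;> linarith)
    rwa [inv_div, one_sub_div (by linarith), sub_sub_cancel] at this
  have hlogs : (s - 1) * log (s / (s - 1)) ≤ 1 := by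
    have := log_le_sub_one_of_pos (show 0 < s / (s - 1) by apply div_pos <;> linarith)
    rw [div_sub_one (by linarith), sub_sub_cancel] at this
    calc (s - 1) * log (s / (s - 1)) ≤ (s - 1) * (1 / (s - 1)) := by gcongr
      _ = 1 := mul_one_div_cancel (by linarith)
  rw [log_eq_of_missingWordsGrowthBase_eq_one ha hs h]
  linarith [mul_le_mul_of_nonneg_left hlogA (by linarith : 0 ≤ s - 1), mul_one_div (s - 1) a]

lemma sub_one_div_mul_log_le_log {x y : ℝ} (hx : 1 < x) (hxy : x ≤ y) :
    (x - 1) / (y - 1) * log y ≤ log x := by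
  have h := (strictConcaveOn_log_Ioi.concaveOn.neg).secant_mono (a := 1) (x := x) (y := y)
    (by norm_num) (by simp; linarith) (by simp; linarith) hx.ne' (by linarith) hxy
  simp only [Pi.neg_apply, log_one, neg_zero, sub_zero] at h
  rw [neg_div, neg_div, neg_le_neg_iff, div_le_div_iff₀ (by linarith) (by linarith)] at h
  rw [div_mul_eq_mul_div, div_le_iff₀ (by linarith)]
  linarith

lemma log_le_half_sub_two {x : ℝ} (hx : 16 ≤ x) : log x ≤ x / 2 - 2 := by
  have hsqrt : 4 ≤ √x := by
    rw [show (4 : ℝ) = √16 by rw [show (16 : ℝ) = 4 ^ 2 by norm_num, sqrt_sq (by norm_num)]]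
    exact sqrt_le_sqrt hx
  have hlog : log x / 2 ≤ √x - 1 := by
    rw [← log_sqrt (by linarith)]
    exact log_le_sub_one_of_pos (by linarith)
  nlinarith [sq_sqrt (show 0 ≤ x by linarith)]

lemma four_mul_sq_add_one_lt_exp {x : ℝ} (hx : 16 ≤ x) : 4 * x ^ 2 + 1 < exp x := by
  have h := Real.pow_div_factorial_le_exp x (by linarith) 4
  norm_num [Nat.factorial] at h
  have hx2 : 256 ≤ x ^ 2 := by nlinarith
  have hx4 : 256 * x ^ 2 ≤ x ^ 4 := by nlinarith
  linarith

lemma sub_one_div_lt_log_mul_log_add_log_log {A : ℝ} (hA : exp 16 ≤ A) :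
    (A * (log A + log (log A)) - 1) / (A - 1) < log (A * (log A + log (log A))) := by
  have hA₀ : 0 < A := (exp_pos 16).trans_le hA
  set l := log A
  set m := log l
  have hl : 16 ≤ l := by simpa using log_le_log (exp_pos 16) hA
  have hm : 1 ≤ m := by
    rw [← log_exp 1]
    exact log_le_log (exp_pos 1) (by linarith [exp_one_lt_d9])
  have hml : m ≤ l := (log_le_sub_one_of_pos (by linarith)).trans (by linarith)
  have hAl : 4 * l ^ 2 + 1 < A := by simpa [l, exp_log hA₀] using four_mul_sq_add_one_lt_exp hl
  have hA₁ : 0 < A - 1 := by nlinarith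
  have hlog : l + m + m / (l + m) ≤ log (A * (l + m)) := by
    have h := one_sub_inv_le_log_of_pos (show 0 < (l + m) / l by positivity)
    rw [log_div (by positivity) (by positivity), inv_div, one_sub_div (by positivity),
      add_sub_cancel_left] at h
    rw [log_mul hA₀.ne' (by positivity)]
    linarith
  have hfrac : (l + m) / (A - 1) < m / (l + m) := by
    rw [div_lt_div_iff₀ (by linarith) (by positivity)]
    have h₁ : (l + m) * (l + m) ≤ 4 * l ^ 2 := by nlinarith
    have h₂ : A - 1 ≤ m * (A - 1) := by nlinarith
    linarith
  calc (A * (l + m) - 1) / (A - 1) < A * (l + m) / (A - 1) := by gcongr; linarith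
    _ = l + m + (l + m) / (A - 1) := by field_simp; ring
    _ < l + m + m / (l + m) := by linarith
    _ ≤ log (A * (l + m)) := hlog

lemma log_mul_log_add_log_log_add_two_lt {A : ℝ} (hA : exp 16 ≤ A) :
    log (A * (log A + log (log A) + 2)) < (A * (log A + log (log A) + 2) - 1) / A - 1 := by
  have hA₀ : 0 < A := (exp_pos 16).trans_le hA
  set l := log A
  set m := log l
  have hl : 16 ≤ l := by simpa using log_le_log (exp_pos 16) hA
  have hm : 0 ≤ m := log_nonneg (by linarith)
  have hml : 2 * m + 4 ≤ l := by linarith [log_le_half_sub_two hl]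
  have hlog : log (A * (l + m + 2)) ≤ l + m + (m + 2) / l := by
    have h := log_le_sub_one_of_pos (show 0 < (l + m + 2) / l by positivity)
    have hsub : (l + m + 2) / l - 1 = (m + 2) / l := by field_simp; ring
    rw [log_div (by positivity) (by positivity), hsub] at h
    rw [log_mul hA₀.ne' (by positivity)]
    linarith
  have h₁ : (m + 2) / l ≤ 1 / 2 := by rw [div_le_iff₀ (by positivity)]; linarith
  have h₂ : 1 / A < 1 / 2 := by
    rw [div_lt_div_iff₀ hA₀ (by norm_num)]
    linarith [add_one_le_exp 16]
  have hrhs : (A * (l + m + 2) - 1) / A - 1 = l + m + 1 - 1 / A := by field_simp; ring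
  rw [hrhs]
  linarith

lemma mul_log_add_log_log_lt_of_missingWordsGrowthBase_eq_one {a s : ℝ} (ha : exp 16 ≤ a)
    (hs : 1 < s) (h : missingWordsGrowthBase a s = 1) : a * (log a + log (log a)) < s := by
  have ha₁ : 1 < a := by linarith [add_one_le_exp 16]
  by_contra! hsL
  set L := a * (log a + log (log a))
  have hsecant := sub_one_div_mul_log_le_log hs hsL
  have hweight : 0 < (s - 1) / (L - 1) := div_pos (by linarith) (by linarith)
  have hL := mul_lt_mul_of_pos_left (sub_one_div_lt_log_mul_log_add_log_log ha) hweight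
  rw [div_mul_div_comm, mul_comm (L - 1), mul_div_mul_right _ _ (by linarith)] at hL
  linarith [log_le_of_missingWordsGrowthBase_eq_one ha₁ hs h]

lemma lt_mul_log_add_log_log_add_two_of_missingWordsGrowthBase_eq_one {a s : ℝ}
    (ha : exp 16 ≤ a) (hs : 1 < s) (h : missingWordsGrowthBase a s = 1) :
    s < a * (log a + log (log a) + 2) := by
  have ha₁ : 1 < a := by linarith [add_one_le_exp 16]
  by_contra! hUs
  set U := a * (log a + log (log a) + 2)
  have hlog : 16 ≤ log a := by simpa using log_le_log (exp_pos 16) ha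
  have hloglog : 0 ≤ log (log a) := log_nonneg (by linarith)
  have haU : a ≤ U := le_mul_of_one_le_right (by linarith) (by linarith)
  have hU₀ : 0 < U := by linarith
  have htangent : log s ≤ log U + (s - U) / a := by
    have h₁ := log_le_sub_one_of_pos (div_pos (by linarith : 0 < s) hU₀)
    rw [log_div (by linarith) hU₀.ne', div_sub_one hU₀.ne'] at h₁
    have h₂ : (s - U) / U ≤ (s - U) / a :=
      div_le_div_of_nonneg_left (by linarith) (by linarith) haU
    linarith
  have hU := log_mul_log_add_log_log_add_two_lt ha
  have hdiff : (s - 1) / a - (s - U) / a = (U - 1) / a := by ring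
  linarith [le_log_of_missingWordsGrowthBase_eq_one ha₁ hs h]

lemma sum_Icc_one_div_eq_harmonic (n : ℕ) :
    ∑ i ∈ Finset.Icc 1 n, (1 : ℝ) / i = harmonic n := by
  rw [harmonic_eq_sum_Icc]
  push_cast
  simp only [one_div]

lemma isEquivalent_harmonic_log : (fun n : ℕ => (harmonic n : ℝ)) ~[atTop] fun n => log n :=
  (tendsto_harmonic_sub_log.isBigO_one ℝ).trans_isLittleO
    (isLittleO_const_log_atTop.comp_tendsto tendsto_natCast_atTop_atTop)

lemma isEquivalent_mul_log_of_bounds {f : ℕ → ℝ}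
    (hf : ∀ᶠ n : ℕ in atTop,
      n * (log n + log (log n)) < f n ∧ f n < n * (log n + log (log n) + 2)) :
    f ~[atTop] fun n => n * log n := by
  have hsmall : (fun x : ℝ => log (log x) + 2) =o[atTop] log :=
    (isLittleO_log_id_atTop.comp_tendsto tendsto_log_atTop).add isLittleO_const_log_atTop
  refine IsBigO.trans_isLittleO (g := fun n : ℕ => (n : ℝ) * (log (log n) + 2)) ?_
    ((isBigO_refl _ _).mul_isLittleO (hsmall.comp_tendsto tendsto_natCast_atTop_atTop))
  refine IsBigO.of_bound 1 ?_
  filter_upwards [hf, ((tendsto_log_atTop.comp tendsto_log_atTop).comp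
    tendsto_natCast_atTop_atTop).eventually_ge_atTop 0] with n ⟨hlo, hhi⟩ hloglog
  simp only [Function.comp_apply] at hloglog
  rw [Pi.sub_apply, one_mul, Real.norm_eq_abs, Real.norm_eq_abs, abs_le,
    abs_of_nonneg (by positivity)]
  constructor <;> nlinarith [(Nat.cast_nonneg n : (0 : ℝ) ≤ n)]

/-- Let `D(a,s) = (a-1)^(s-1) s^s / (a^(s-1) (s-1)^(s-1))` and let `r a > 1` solve
`D(a, r a) = 1`.  Then for all sufficiently large `a`,
`a (log a + log log a) < r a < a (log a + log log a + 2)`; consequently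
`r a / (a H_a) → 1` as `a → ∞`. -/
theorem stmt_16 (r : ℕ → ℝ)
    (hr : ∀ a : ℕ, 2 ≤ a → 1 < r a ∧
      ((a : ℝ) - 1) ^ (r a - 1) * (r a) ^ (r a)
        / ((a : ℝ) ^ (r a - 1) * (r a - 1) ^ (r a - 1)) = 1) :
    (∃ a₀ : ℕ, ∀ a : ℕ, a₀ ≤ a →
      (a : ℝ) * (Real.log a + Real.log (Real.log a)) < r a ∧
      r a < (a : ℝ) * (Real.log a + Real.log (Real.log a) + 2)) ∧
    Tendsto (fun a : ℕ => r a / ((a : ℝ) * ∑ i ∈ Finset.Icc 1 a, (1 : ℝ) / i))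
      atTop (nhds 1) := by
  have hbounds : ∀ᶠ a : ℕ in atTop, (a : ℝ) * (log a + log (log a)) < r a ∧
      r a < (a : ℝ) * (log a + log (log a) + 2) := by
    filter_upwards [eventually_ge_atTop 2,
      tendsto_natCast_atTop_atTop.eventually_ge_atTop (exp 16)] with a ha₂ ha
    obtain ⟨hs, h⟩ := hr a ha₂
    exact ⟨mul_log_add_log_log_lt_of_missingWordsGrowthBase_eq_one ha hs h,
      lt_mul_log_add_log_log_add_two_of_missingWordsGrowthBase_eq_one ha hs h⟩
  refine ⟨eventually_atTop.1 hbounds, ?_⟩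
  have hne : ∀ᶠ a : ℕ in atTop,
      (a : ℝ) * ∑ i ∈ Finset.Icc 1 a, (1 : ℝ) / i ≠ 0 := by
    filter_upwards [eventually_ne_atTop 0] with a ha
    rw [sum_Icc_one_div_eq_harmonic]
    have := harmonic_pos ha
    positivity
  refine (isEquivalent_iff_tendsto_one hne).1 ?_
  simp only [sum_Icc_one_div_eq_harmonic]
  exact (isEquivalent_mul_log_of_bounds hbounds).trans
    (IsEquivalent.refl.mul isEquivalent_harmonic_log.symm)
end

section
/- For every integer a ≥ 2 and integer n ≥ a, sum over compositions l_1 + ... + l_{a-1} = n-1 into positive integers of the product 1^{l_1} 2^{l_2} ⋯ (a-1)^{l_{a-1}} equals sum over the same compositions of the multinomial coefficient C(n-1; l_1, l_2, ..., l_{a-1}). -/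
open Finset
open scoped Classical

open scoped Nat

/-!
Let `P k m` be the sum over compositions `l` of `m` into `k` positive parts of `∏ (i + 1) ^ lᵢ`,
and `Q k m` the sum of the multinomial coefficients `C(m; l)`. Both satisfy
`T (k + 1) (m + 1) = (k + 1) * (T k m + T (k + 1) m)` with the same boundary values (both equal
`k! S(m, k)`), so they agree. For `P`, split according to whether the last part equals `1`;
for `Q`, apply Pascal's rule `C(m + 1; l) = ∑ⱼ C(m; l - eⱼ)` and split the `j`-th term
according to whether `lⱼ = 1`.
-/

theorem Nat.prod_factorial_mul_multinomial_sub_single {α : Type*} [DecidableEq α]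
    {s : Finset α} {f : α → ℕ} {j : α} (hj : j ∈ s) (hfj : f j ≠ 0) :
    (∏ i ∈ s, (f i)!) * Nat.multinomial s (f - Pi.single j 1)
      = f j * (∑ i ∈ s, f i - 1)! := by
  set g := f - Pi.single j 1
  have hgj : g j + 1 = f j := by simp [g]; omega
  have hg : ∀ i ∈ s.erase j, g i = f i := fun i hi => by simp [g, ne_of_mem_erase hi]
  have hsum : ∑ i ∈ s, f i = ∑ i ∈ s, g i + 1 := by
    rw [← add_sum_erase _ _ hj, ← add_sum_erase _ g hj, sum_congr rfl hg, ← hgj]; ring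
  have hprod : ∏ i ∈ s, (f i)! = f j * ∏ i ∈ s, (g i)! := by
    rw [← mul_prod_erase _ _ hj, ← mul_prod_erase s (fun i => (g i)!) hj,
      prod_congr rfl fun i hi => congrArg Nat.factorial (hg i hi), ← hgj, Nat.factorial_succ]
    ring
  rw [hprod, mul_assoc, Nat.multinomial_spec, hsum, Nat.add_sub_cancel]

theorem Nat.multinomial_eq_sum_multinomial_sub_single {α : Type*} [DecidableEq α]
    {s : Finset α} {f : α → ℕ} (h : ∑ i ∈ s, f i ≠ 0) :
    Nat.multinomial s f = ∑ j ∈ s with f j ≠ 0, Nat.multinomial s (f - Pi.single j 1) := by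
  refine Nat.eq_of_mul_eq_mul_left (prod_pos (s := s) fun i _ => (f i).factorial_pos) ?_
  rw [Nat.multinomial_spec, mul_sum, sum_congr rfl fun j hj =>
      Nat.prod_factorial_mul_multinomial_sub_single (mem_filter.1 hj).1 (mem_filter.1 hj).2,
    ← sum_mul, sum_filter_ne_zero, Nat.mul_factorial_pred h]

theorem Nat.multinomial_univ_insertNth_zero {k : ℕ} (j : Fin (k + 1)) (f : Fin k → ℕ) :
    Nat.multinomial univ (j.insertNth 0 f) = Nat.multinomial univ f := by
  simp [Nat.multinomial, Fin.sum_univ_succAbove _ j, Fin.prod_univ_succAbove _ j]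

theorem sum_add_pi_single_apply {ι M : Type*} [Fintype ι] [DecidableEq ι] [AddCommMonoid M]
    (l : ι → M) (j : ι) (b : M) : ∑ i, (l + Pi.single j b : ι → M) i = ∑ i, l i + b := by
  simp [sum_add_distrib]

theorem Fin.insertNth_sub_single {k : ℕ} (j : Fin (k + 1)) (x y : ℕ) (l : Fin k → ℕ) :
    j.insertNth (α := fun _ => ℕ) x l - Pi.single j y = j.insertNth (x - y) l := by
  ext i
  cases i using Fin.succAboveCases j <;> simp

def positiveCompositions (k m : ℕ) : Finset (Fin k → ℕ) :=
  (Finset.Nat.antidiagonalTuple k m).filter fun l => ∀ j, 0 < l j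

section

variable {k m : ℕ}

theorem mem_positiveCompositions {l : Fin k → ℕ} :
    l ∈ positiveCompositions k m ↔ (∀ j, 0 < l j) ∧ ∑ j, l j = m := by
  rw [positiveCompositions, mem_filter, Finset.Nat.mem_antidiagonalTuple, and_comm]

theorem positiveCompositions_succ_zero : positiveCompositions (k + 1) 0 = ∅ := by
  refine eq_empty_of_forall_notMem fun l hl => ?_
  obtain ⟨hpos, hsum⟩ := mem_positiveCompositions.1 hl
  exact (hpos 0).ne' (sum_eq_zero_iff.1 hsum 0 (mem_univ _))

variable {M : Type*} [AddCommMonoid M]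

theorem sum_positiveCompositions_filter_eq_one (j : Fin (k + 1)) (w : (Fin (k + 1) → ℕ) → M) :
    ∑ l ∈ positiveCompositions (k + 1) (m + 1) with l j = 1, w l
      = ∑ l ∈ positiveCompositions k m, w (j.insertNth 1 l) := by
  have hinv : ∀ l ∈ {l ∈ positiveCompositions (k + 1) (m + 1) | l j = 1},
      j.insertNth 1 (j.removeNth l) = l := fun l hl => by
    rw [Fin.insertNth_removeNth, Function.update_eq_self_iff, (mem_filter.1 hl).2]
  refine sum_nbij' j.removeNth (fun l => j.insertNth 1 l) ?_ ?_ hinv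
    (fun l _ => Fin.removeNth_insertNth _ _ _) (fun l hl => by rw [hinv l hl])
  · intro l hl
    obtain ⟨hmem, hj⟩ := mem_filter.1 hl
    obtain ⟨hpos, hsum⟩ := mem_positiveCompositions.1 hmem
    refine mem_positiveCompositions.2 ⟨fun i => hpos _, ?_⟩
    rw [Fin.sum_univ_succAbove _ j, hj, add_comm] at hsum
    exact Nat.add_right_cancel hsum
  · intro l hl
    obtain ⟨hpos, hsum⟩ := mem_positiveCompositions.1 hl
    refine mem_filter.2 ⟨mem_positiveCompositions.2 ⟨fun i => ?_, ?_⟩, by simp⟩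
    · cases i using Fin.succAboveCases j <;> simp [hpos]
    · simp [Fin.sum_univ_succAbove _ j, hsum, add_comm]

theorem sum_positiveCompositions_filter_ne_one (j : Fin (k + 1)) (w : (Fin (k + 1) → ℕ) → M) :
    ∑ l ∈ positiveCompositions (k + 1) (m + 1) with ¬l j = 1, w l
      = ∑ l ∈ positiveCompositions (k + 1) m, w (l + Pi.single j 1) := by
  have hle : ∀ l ∈ {l ∈ positiveCompositions (k + 1) (m + 1) | ¬l j = 1},
      Pi.single j 1 ≤ l := fun l hl i => by
    have := (mem_positiveCompositions.1 (mem_filter.1 hl).1).1 i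
    simp only [Pi.single_apply]
    split_ifs <;> omega
  refine sum_nbij' (· - Pi.single j 1) (· + Pi.single j 1) ?_ ?_
    (fun l hl => tsub_add_cancel_of_le (hle l hl)) (fun l _ => add_tsub_cancel_right _ _)
    (fun l hl => by rw [tsub_add_cancel_of_le (hle l hl)])
  · intro l hl
    obtain ⟨hmem, hj⟩ := mem_filter.1 hl
    obtain ⟨hpos, hsum⟩ := mem_positiveCompositions.1 hmem
    refine mem_positiveCompositions.2 ⟨fun i => ?_, ?_⟩
    · have := hpos i
      rcases eq_or_ne i j with rfl | hi
      · simp only [Pi.sub_apply, Pi.single_eq_same]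
        omega
      · simpa [hi] using this
    · rw [← tsub_add_cancel_of_le (hle l hl), sum_add_pi_single_apply] at hsum
      exact Nat.add_right_cancel hsum
  · intro l hl
    obtain ⟨hpos, hsum⟩ := mem_positiveCompositions.1 hl
    refine mem_filter.2 ⟨mem_positiveCompositions.2 ⟨fun i => ?_, ?_⟩, ?_⟩
    · exact Nat.add_pos_left (hpos i) _
    · rw [sum_add_pi_single_apply, hsum]
    · simpa using (hpos j).ne'

theorem sum_positiveCompositions_succ_succ (j : Fin (k + 1)) (w : (Fin (k + 1) → ℕ) → M) :
    ∑ l ∈ positiveCompositions (k + 1) (m + 1), w l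
      = ∑ l ∈ positiveCompositions k m, w (j.insertNth 1 l)
        + ∑ l ∈ positiveCompositions (k + 1) m, w (l + Pi.single j 1) := by
  rw [← sum_filter_add_sum_filter_not _ (fun l => l j = 1),
    sum_positiveCompositions_filter_eq_one, sum_positiveCompositions_filter_ne_one]

def compositionPowerSum (k m : ℕ) : ℕ :=
  ∑ l ∈ positiveCompositions k m, ∏ i : Fin k, ((i : ℕ) + 1) ^ l i

def compositionMultinomialSum (k m : ℕ) : ℕ :=
  ∑ l ∈ positiveCompositions k m, Nat.multinomial univ l

theorem compositionPowerSum_succ_succ :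
    compositionPowerSum (k + 1) (m + 1)
      = (k + 1) * compositionPowerSum k m + (k + 1) * compositionPowerSum (k + 1) m := by
  rw [compositionPowerSum, sum_positiveCompositions_succ_succ (Fin.last k), compositionPowerSum,
    compositionPowerSum, mul_sum, mul_sum]
  congr 1 <;> refine sum_congr rfl fun l _ => ?_
  · simp [Fin.prod_univ_castSucc, Fin.insertNth_last', mul_comm]
  · simp [Fin.prod_univ_castSucc, pow_add, Pi.single_apply]
    ring

theorem compositionMultinomialSum_succ_succ :
    compositionMultinomialSum (k + 1) (m + 1)
      = (k + 1) * compositionMultinomialSum k m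
        + (k + 1) * compositionMultinomialSum (k + 1) m := by
  have hpascal : ∀ l ∈ positiveCompositions (k + 1) (m + 1),
      Nat.multinomial univ l = ∑ j, Nat.multinomial univ (l - Pi.single j 1) := fun l hl => by
    obtain ⟨hpos, hsum⟩ := mem_positiveCompositions.1 hl
    rw [Nat.multinomial_eq_sum_multinomial_sub_single (by omega),
      filter_true_of_mem fun j _ => (hpos j).ne']
  have hsplit : ∀ j : Fin (k + 1),
      ∑ l ∈ positiveCompositions (k + 1) (m + 1), Nat.multinomial univ (l - Pi.single j 1)
        = compositionMultinomialSum k m + compositionMultinomialSum (k + 1) m := fun j => by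
    simp only [sum_positiveCompositions_succ_succ j, Fin.insertNth_sub_single, tsub_self,
      Nat.multinomial_univ_insertNth_zero, add_tsub_cancel_right, compositionMultinomialSum]
  rw [compositionMultinomialSum, sum_congr rfl hpascal, sum_comm,
    sum_congr rfl fun j _ => hsplit j, sum_const, card_univ, Fintype.card_fin, smul_eq_mul]
  ring

end

theorem compositionPowerSum_eq_compositionMultinomialSum (k m : ℕ) :
    compositionPowerSum k m = compositionMultinomialSum k m := by
  induction m generalizing k with
  | zero =>
    rcases k with _ | k <;>
      simp [compositionPowerSum, compositionMultinomialSum, positiveCompositions_succ_zero]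
  | succ m ih =>
    rcases k with _ | k
    · simp [compositionPowerSum, compositionMultinomialSum]
    · rw [compositionPowerSum_succ_succ, compositionMultinomialSum_succ_succ, ih, ih]

theorem sum_filter_fin_eq_sum_positiveCompositions {M : Type*} [AddCommMonoid M] (k n : ℕ)
    (w : (Fin k → ℕ) → M) :
    ∑ l ∈ (Finset.univ : Finset (Fin k → Fin n)).filter
        (fun l => (∀ j, 1 ≤ (l j : ℕ)) ∧ ∑ j, (l j : ℕ) = n - 1), w (fun j => l j)
      = ∑ l ∈ positiveCompositions k (n - 1), w l := by
  refine sum_nbij (fun l j => (l j : ℕ)) (fun l hl => ?_) (fun l _ l' _ h => ?_) (fun l hl => ?_)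
    (fun _ _ => rfl)
  · obtain ⟨hpos, hsum⟩ := (mem_filter.1 hl).2
    exact mem_positiveCompositions.2 ⟨hpos, hsum⟩
  · exact funext fun j => Fin.ext (congrFun h j)
  · obtain ⟨hpos, hsum⟩ := mem_positiveCompositions.1 hl
    have hlt : ∀ j, l j < n := fun j => by
      have := single_le_sum (fun i _ => Nat.zero_le (l i)) (mem_univ j)
      have := hpos j
      omega
    exact ⟨fun j => ⟨l j, hlt j⟩, mem_filter.2 ⟨mem_univ _, hpos, hsum⟩, rfl⟩

theorem stmt_17_general (a n : ℕ) :
    ∑ l ∈ (Finset.univ : Finset (Fin (a - 1) → Fin n)).filter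
        (fun l => (∀ j, 1 ≤ (l j : ℕ)) ∧ ∑ j, (l j : ℕ) = n - 1),
      ∏ j : Fin (a - 1), ((j : ℕ) + 1) ^ ((l j : ℕ))
    = ∑ l ∈ (Finset.univ : Finset (Fin (a - 1) → Fin n)).filter
        (fun l => (∀ j, 1 ≤ (l j : ℕ)) ∧ ∑ j, (l j : ℕ) = n - 1),
      Nat.multinomial Finset.univ (fun j => (l j : ℕ)) :=
  (sum_filter_fin_eq_sum_positiveCompositions _ _ _).trans <|
    (compositionPowerSum_eq_compositionMultinomialSum _ _).trans
      (sum_filter_fin_eq_sum_positiveCompositions _ _ _).symm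

/-- Summing over ordered `(a-1)`-tuples of positive integers `l₁ + ⋯ + l_{a-1} = n - 1`, the
sum of the products `1^{l₁} 2^{l₂} ⋯ (a-1)^{l_{a-1}}` equals the sum of the multinomial
coefficients `C(n-1; l₁, …, l_{a-1})`. -/
theorem stmt_17 (a n : ℕ) (ha : 2 ≤ a) (hn : a ≤ n) :
    ∑ l ∈ (Finset.univ : Finset (Fin (a - 1) → Fin n)).filter
        (fun l => (∀ j, 1 ≤ (l j : ℕ)) ∧ ∑ j, (l j : ℕ) = n - 1),
      ∏ j : Fin (a - 1), ((j : ℕ) + 1) ^ ((l j : ℕ))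
    = ∑ l ∈ (Finset.univ : Finset (Fin (a - 1) → Fin n)).filter
        (fun l => (∀ j, 1 ≤ (l j : ℕ)) ∧ ∑ j, (l j : ℕ) = n - 1),
      Nat.multinomial Finset.univ (fun j => (l j : ℕ)) :=
  stmt_17_general a n
end
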